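/- ∈*-Separation conclusion: let φ : α → Prop be a predicate that respects =* (i.e., for all x y, x =* y implies (φ x ↔ φ y)). For all A and S, if the E-elements of S are exactly the objects y with y ∈* A and φ y (i.e., ∀ y, E y S ↔ (y ∈* A ∧ φ y)), then S is a set and ∀ y, y ∈* S ↔ (y ∈* A ∧ φ y). -/

import Mathlib

/-- Coextensionality: `x =* y` iff `x` and `y` have the same `E`-elements. -/
def coext {α : Type*} (E : α → α → Prop) (x y : α) : Prop :=
  ∀ z, E z x ↔ E z y

/-- `set(y)`: membership in `y` respects coextensionality. -/
def isSet {α : Type*} (E : α → α → Prop) (y : α) : Prop :=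
  ∀ m n, coext E m n → (E m y ↔ E n y)

/-- `x ∈* y` iff `y` is a set and `E x y`. -/
def memStar {α : Type*} (E : α → α → Prop) (x y : α) : Prop :=
  isSet E y ∧ E x y

section

variable {α : Type*} {E : α → α → Prop}

theorem memStar_iff_of_coext {m n : α} (hmn : coext E m n) (A : α) :
    memStar E m A ↔ memStar E n A :=
  and_congr_right fun hA => hA m n hmn

theorem memStar_iff_of_isSet {S : α} (hS : isSet E S) (y : α) : memStar E y S ↔ E y S :=
  and_iff_right hS

theorem isSet_of_forall_iff {ψ : α → Prop} (hψ : ∀ x y, coext E x y → (ψ x ↔ ψ y))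
    {S : α} (hS : ∀ y, E y S ↔ ψ y) : isSet E S := fun m n hmn => by
  rw [hS m, hS n]
  exact hψ m n hmn

end

/-- `∈*`-Separation conclusion: if `φ` respects `=*` and the `E`-elements of
`S` are exactly the `y` with `y ∈* A` and `φ y`, then `S` is a set and its
`∈*`-elements are exactly those `y`. -/
theorem separation_star {α : Type*} (E : α → α → Prop) (φ : α → Prop)
    (hφ : ∀ x y, coext E x y → (φ x ↔ φ y)) :
    ∀ A S, (∀ y, E y S ↔ (memStar E y A ∧ φ y)) →
      isSet E S ∧ (∀ y, memStar E y S ↔ (memStar E y A ∧ φ y)) := by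
  intro A S hS
  have hset : isSet E S :=
    isSet_of_forall_iff (fun x y hxy => and_congr (memStar_iff_of_coext hxy A) (hφ x y hxy)) hS
  exact ⟨hset, fun y => (memStar_iff_of_isSet hset y).trans (hS y)⟩
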